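/- arXiv:2002.01818 — 4 statements merged into one kernel-verified Lean document; each statement's English description precedes it below -/
import Mathlib

section
/- Let A_q, A_{q̂} be SARX companion matrices with coefficient rows h_q, h_{q̂}. Define polynomials ψ_j(z) recursively by ψ_0(z) = 1 and ψ_{j+1}(z) = z ψ_j(z) + ((h_q - h_{q̂}) d_j), where d_0 = e_1 and d_{j+1} = A_q d_j. Then for all j ≥ 0, ψ_j(A_{q̂}) e_1 = A_q^j e_1. -/
/-- The companion-like matrix of a SISO (S)ARX system of type `(ny, nu)` with coefficient
row `h` (0-based indexing: `h i` corresponds to `h^{i+1}` in the paper):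
`A e_j = h^j e_1 + e_{j+1}` for `j ∈ {1,...,n-1} \ {n_y}`, `A e_{n_y} = h^{n_y} e_1`,
`A e_n = h^n e_1`, where `n = n_y + n_u`. -/
def sarxCompanion (ny nu : ℕ) (h : Fin (ny + nu) → ℝ) :
    Matrix (Fin (ny + nu)) (Fin (ny + nu)) ℝ :=
  Matrix.of fun i k =>
    (if (i : ℕ) = 0 then h k else 0) +
    (if (i : ℕ) = (k : ℕ) + 1 ∧ (k : ℕ) + 1 ≠ ny then 1 else 0)

/-- The subspace `X1 = span{e_1, ..., e_{n_y}}`. -/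
def sarxX1 (ny nu : ℕ) : Submodule ℝ (Fin (ny + nu) → ℝ) :=
  Submodule.span ℝ {v : Fin (ny + nu) → ℝ | ∃ i : Fin (ny + nu), (i : ℕ) < ny ∧ v = Pi.single i 1}

lemma sarx_diff (ny nu : ℕ) (h0 : 0 < ny + nu) (hq hqhat : Fin (ny + nu) → ℝ)
    (v : Fin (ny + nu) → ℝ) :
    (sarxCompanion ny nu hq).mulVec v =
      (sarxCompanion ny nu hqhat).mulVec v +
        (∑ i, (hq i - hqhat i) * v i) •
          (Pi.single (⟨0, h0⟩ : Fin (ny + nu)) 1 : Fin (ny + nu) → ℝ) := by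
  funext i
  simp only [Matrix.mulVec, dotProduct, sarxCompanion, Matrix.of_apply,
    Pi.add_apply, Pi.smul_apply, smul_eq_mul, add_mul, Finset.sum_add_distrib,
    sub_mul]
  rw [Pi.single_apply]
  by_cases hi : (i : ℕ) = 0
  · have : i = (⟨0, h0⟩ : Fin (ny + nu)) := Fin.ext hi
    simp [this, Finset.sum_sub_distrib]
  · have : (⟨0, h0⟩ : Fin (ny + nu)) ≠ i := fun h => hi (by simp [← h])
    simp only [hi, if_false, this, if_neg]
    simp [Ne.symm this]

/-- With `ψ_0 = 1`, `ψ_{j+1}(z) = z ψ_j(z) + ((h_q - h_q̂) d_j)` where `d_0 = e_1`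
and `d_{j+1} = A_q d_j`, one has `ψ_j(A_q̂) e_1 = A_q^j e_1` for all `j ≥ 0`. -/
theorem stmt6 (ny nu : ℕ) (hny : 1 ≤ ny) (hnu : 1 ≤ nu)
    (hq hqhat : Fin (ny + nu) → ℝ)
    (ψ : ℕ → Polynomial ℝ) (d : ℕ → Fin (ny + nu) → ℝ)
    (hd0 : d 0 = Pi.single (⟨0, by omega⟩ : Fin (ny + nu)) 1)
    (hdstep : ∀ j, d (j + 1) = (sarxCompanion ny nu hq).mulVec (d j))
    (hψ0 : ψ 0 = 1)
    (hψstep : ∀ j, ψ (j + 1) =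
      Polynomial.X * ψ j + Polynomial.C (∑ i, (hq i - hqhat i) * d j i)) :
    ∀ j : ℕ,
      (Polynomial.aeval (sarxCompanion ny nu hqhat) (ψ j)).mulVec
          (Pi.single (⟨0, by omega⟩ : Fin (ny + nu)) 1) =
        ((sarxCompanion ny nu hq) ^ j).mulVec
          (Pi.single (⟨0, by omega⟩ : Fin (ny + nu)) 1) := by
  have h0 : 0 < ny + nu := by omega
  have hd : ∀ j, d j = ((sarxCompanion ny nu hq) ^ j).mulVec
      (Pi.single (⟨0, h0⟩ : Fin (ny + nu)) 1) := by
    intro j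
    induction j with
    | zero => rw [pow_zero, Matrix.one_mulVec, hd0]
    | succ j ih =>
        rw [hdstep, ih, pow_succ', Matrix.mulVec_mulVec]
  intro j
  induction j with
  | zero => simp [hψ0]
  | succ j ih =>
      rw [hψstep, map_add, map_mul, Polynomial.aeval_X, Polynomial.aeval_C,
        Matrix.add_mulVec, ← Matrix.mulVec_mulVec, ih, pow_succ',
        ← Matrix.mulVec_mulVec, sarx_diff ny nu h0 hq hqhat, ← hd]
      congr 1
      rw [Algebra.algebraMap_eq_smul_one, Matrix.smul_mulVec, Matrix.one_mulVec]
end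

section
/- Let A be the SARX companion matrix of type (n_y, n_u) with coefficients h^1,...,h^n, n = n_y + n_u, and suppose h^n ≠ 0. Then the row vectors e_{n_y}^T A^j for j = 0,...,n - 1 span R^{1×n}. -/
/-!
Multiplying a row vector by `A` acts as `v ↦ v₀ • h + v N`, where `N = sarxShift` moves every
coordinate one place towards the front, except into coordinate `ny - 1`. Hence
`e_{ny-1} Aʲ = e_{ny-1-j}` for `j < ny`, `e_{ny-1} A^{ny+j} = h Aʲ`, and `h Nᵐ` lies in the span of
`h, h A, …, h Aᵐ`. On the coordinates `k ≥ ny`, `h Nᵐ` is `h` shifted by `m`; so for `i ≥ ny` the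
row `h N^{n-1-i}` vanishes beyond `i` and equals `h_{n-1} ≠ 0` at `i`. With `e_i` for `i < ny`
these rows form a lower triangular matrix with nonzero diagonal, hence they span.
-/

open Matrix Submodule Set

theorem Matrix.IsLowerTriangular.span_rows_eq_top {K ι : Type*} [Field K] [Fintype ι]
    [LinearOrder ι] {M : Matrix ι ι K} (hM : M.IsLowerTriangular) (hdiag : ∀ i, M i i ≠ 0) :
    span K (range M) = ⊤ := by
  have hdet : M.det ≠ 0 := by
    rw [det_of_isLowerTriangular M hM]
    exact Finset.prod_ne_zero_iff.mpr fun i _ => hdiag i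
  exact (linearIndependent_rows_of_det_ne_zero hdet).span_eq_top_of_card_eq_finrank' (by simp)

namespace Matrix

variable {R ι : Type*} [CommRing R] [Fintype ι] [DecidableEq ι]

def rowKrylov (A : Matrix ι ι R) (h : ι → R) (m : ℕ) : Submodule R (ι → R) :=
  span R ((fun j => h ᵥ* A ^ j) '' Iic m)

theorem vecMul_pow_mem_rowKrylov (A : Matrix ι ι R) (h : ι → R) {j m : ℕ} (hj : j ≤ m) :
    h ᵥ* A ^ j ∈ rowKrylov A h m :=
  subset_span ⟨j, hj, rfl⟩

theorem vecMul_mem_rowKrylov_succ {A : Matrix ι ι R} {h x : ι → R} {m : ℕ}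
    (hx : x ∈ rowKrylov A h m) : x ᵥ* A ∈ rowKrylov A h (m + 1) := by
  have hmap := mem_map_of_mem (f := A.vecMulLinear) hx
  rw [rowKrylov, ← span_image, ← image_comp] at hmap
  refine span_mono ?_ hmap
  rintro _ ⟨j, hj, rfl⟩
  exact ⟨j + 1, Nat.succ_le_succ hj, by simp [vecMul_vecMul, pow_succ]⟩

theorem vecMul_pow_mem_rowKrylov_of_vecMul_eq_smul_add {A N : Matrix ι ι R} {h : ι → R}
    (hAN : ∀ v, ∃ c : R, v ᵥ* A = c • h + v ᵥ* N) (m : ℕ) :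
    h ᵥ* N ^ m ∈ rowKrylov A h m := by
  induction m with
  | zero => simpa using vecMul_pow_mem_rowKrylov A h (le_refl 0)
  | succ m ih =>
    obtain ⟨c, hc⟩ := hAN (h ᵥ* N ^ m)
    have hstep : h ᵥ* N ^ (m + 1) = h ᵥ* N ^ m ᵥ* A - c • h := by
      rw [hc, pow_succ, ← vecMul_vecMul]; abel
    rw [hstep]
    refine sub_mem (vecMul_mem_rowKrylov_succ ih) (smul_mem _ _ ?_)
    simpa using vecMul_pow_mem_rowKrylov A h (Nat.zero_le (m + 1))

end Matrix

def sarxShift (ny nu : ℕ) : Matrix (Fin (ny + nu)) (Fin (ny + nu)) ℝ :=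
  Matrix.of fun i k => if (i : ℕ) = (k : ℕ) + 1 ∧ (k : ℕ) + 1 ≠ ny then 1 else 0

section Sarx

variable {ny nu : ℕ}

theorem vecMul_sarxShift_apply (v : Fin (ny + nu) → ℝ) (k : Fin (ny + nu)) :
    (v ᵥ* sarxShift ny nu) k =
      if hk : (k : ℕ) + 1 < ny + nu ∧ (k : ℕ) + 1 ≠ ny then v ⟨k + 1, hk.1⟩ else 0 := by
  simp only [vecMul, dotProduct, sarxShift, of_apply, mul_ite, mul_one, mul_zero]
  split_ifs with hk
  · rw [Finset.sum_eq_single ⟨k + 1, hk.1⟩] <;> grind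
  · exact Finset.sum_eq_zero fun i _ => by grind

theorem vecMul_sarxCompanion [NeZero (ny + nu)] (h v : Fin (ny + nu) → ℝ) :
    v ᵥ* sarxCompanion ny nu h = v 0 • h + v ᵥ* sarxShift ny nu := by
  ext k
  simp [vecMul, dotProduct, sarxCompanion, sarxShift, mul_add, Finset.sum_add_distrib]

theorem vecMul_sarxShift_pow_apply (v : Fin (ny + nu) → ℝ) (m : ℕ) {k : Fin (ny + nu)}
    (hk : ny ≤ k) :
    (v ᵥ* sarxShift ny nu ^ m) k =
      if hkm : (k : ℕ) + m < ny + nu then v ⟨k + m, hkm⟩ else 0 := by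
  induction m generalizing v with
  | zero => simp
  | succ m ih =>
    rw [pow_succ', ← vecMul_vecMul, ih]
    split_ifs with hkm hkm' hkm'
    · rw [vecMul_sarxShift_apply, dif_pos ⟨hkm', by simp; omega⟩]
      simp only [add_assoc]
    · rw [vecMul_sarxShift_apply, dif_neg (by simp; omega)]
    · omega
    · rfl

theorem single_vecMul_sarxCompanion (h : Fin (ny + nu) → ℝ) {i : ℕ} (hi0 : 0 < i)
    (hiny : i ≠ ny) (hin : i < ny + nu) :
    Pi.single (⟨i, hin⟩ : Fin (ny + nu)) 1 ᵥ* sarxCompanion ny nu h =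
      Pi.single ⟨i - 1, by omega⟩ 1 := by
  have : NeZero (ny + nu) := ⟨by omega⟩
  ext k
  rw [vecMul_sarxCompanion, Pi.add_apply, vecMul_sarxShift_apply]
  simp only [Pi.single_apply, Fin.ext_iff, Fin.val_zero, Pi.smul_apply, smul_eq_mul]
  grind

theorem single_zero_vecMul_sarxCompanion [NeZero (ny + nu)] (h : Fin (ny + nu) → ℝ) :
    Pi.single 0 1 ᵥ* sarxCompanion ny nu h = h := by
  ext k
  simp [sarxCompanion]

theorem single_vecMul_sarxCompanion_pow (h : Fin (ny + nu) → ℝ) {i j : ℕ} (hji : j ≤ i)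
    (hi : i < ny) :
    Pi.single (⟨i, by omega⟩ : Fin (ny + nu)) 1 ᵥ* sarxCompanion ny nu h ^ j =
      Pi.single ⟨i - j, by omega⟩ 1 := by
  induction j generalizing i with
  | zero => simp
  | succ j ih =>
    rw [pow_succ', ← vecMul_vecMul, single_vecMul_sarxCompanion h (by omega) (by omega),
      ih (by omega) (by omega)]
    simp only [Nat.sub_sub, Nat.add_comm 1 j]

theorem single_vecMul_sarxCompanion_pow_add (h : Fin (ny + nu) → ℝ) (hny : 0 < ny) (j : ℕ) :
    Pi.single (⟨ny - 1, by omega⟩ : Fin (ny + nu)) 1 ᵥ* sarxCompanion ny nu h ^ (ny + j) =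
      h ᵥ* sarxCompanion ny nu h ^ j := by
  have : NeZero (ny + nu) := ⟨by omega⟩
  have hsplit : ny + j = (ny - 1) + 1 + j := by omega
  rw [hsplit, pow_add, pow_succ, ← vecMul_vecMul, ← vecMul_vecMul,
    single_vecMul_sarxCompanion_pow h le_rfl (by omega),
    show (⟨ny - 1 - (ny - 1), _⟩ : Fin (ny + nu)) = 0 from Fin.ext (by simp),
    single_zero_vecMul_sarxCompanion]

def sarxTriangularRows (ny nu : ℕ) (h : Fin (ny + nu) → ℝ) :
    Matrix (Fin (ny + nu)) (Fin (ny + nu)) ℝ :=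
  fun i => if (i : ℕ) < ny then Pi.single i 1 else h ᵥ* sarxShift ny nu ^ (ny + nu - 1 - i)

theorem sarxTriangularRows_isLowerTriangular (h : Fin (ny + nu) → ℝ) :
    (sarxTriangularRows ny nu h).IsLowerTriangular := by
  intro i j hij
  change i < j at hij
  unfold sarxTriangularRows
  split_ifs with hi
  · exact Pi.single_eq_of_ne hij.ne' 1
  · rw [vecMul_sarxShift_pow_apply _ _ (by omega), dif_neg (by omega)]

theorem sarxTriangularRows_apply_self (h : Fin (ny + nu) → ℝ) (i : Fin (ny + nu)) :
    sarxTriangularRows ny nu h i i =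
      if (i : ℕ) < ny then 1 else h ⟨ny + nu - 1, by have := i.isLt; omega⟩ := by
  unfold sarxTriangularRows
  split_ifs with hi
  · exact Pi.single_eq_same i 1
  · rw [vecMul_sarxShift_pow_apply _ _ (by omega), dif_pos (by omega)]
    congr 2
    omega

theorem sarxTriangularRows_mem_span (h : Fin (ny + nu) → ℝ) (hny : 0 < ny)
    (i : Fin (ny + nu)) :
    sarxTriangularRows ny nu h i ∈ span ℝ {v | ∃ j < ny + nu,
      v = Pi.single (⟨ny - 1, by omega⟩ : Fin (ny + nu)) 1 ᵥ* sarxCompanion ny nu h ^ j} := by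
  have : NeZero (ny + nu) := ⟨by omega⟩
  unfold sarxTriangularRows
  split_ifs with hi
  · refine subset_span ⟨ny - 1 - i, by omega, ?_⟩
    rw [single_vecMul_sarxCompanion_pow h (by omega) (by omega)]
    congr 1
    exact Fin.ext (by simp only; omega)
  · refine span_le.mpr ?_ (vecMul_pow_mem_rowKrylov_of_vecMul_eq_smul_add
      (fun v => ⟨v 0, vecMul_sarxCompanion h v⟩) (ny + nu - 1 - i))
    rintro _ ⟨j, hj, rfl⟩
    exact subset_span ⟨ny + j, by have := mem_Iic.mp hj; omega,
      (single_vecMul_sarxCompanion_pow_add h hny j).symm⟩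

end Sarx

/-- If `h^n ≠ 0`, the row vectors `e_{n_y}ᵀ A^j`, `j = 0,...,n-1`, span `ℝ^{1×n}`. -/
theorem stmt8 (ny nu : ℕ) (hny : 1 ≤ ny) (h : Fin (ny + nu) → ℝ)
    (hz : h ⟨ny + nu - 1, by omega⟩ ≠ 0) :
    Submodule.span ℝ {v : Fin (ny + nu) → ℝ |
      ∃ j < ny + nu, v = Matrix.vecMul
        (Pi.single (⟨ny - 1, by omega⟩ : Fin (ny + nu)) 1)
        ((sarxCompanion ny nu h) ^ j)} = ⊤ := by
  have hdiag : ∀ i, sarxTriangularRows ny nu h i i ≠ 0 := fun i => by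
    rw [sarxTriangularRows_apply_self]
    split_ifs <;> simp [hz]
  rw [eq_top_iff, ← (sarxTriangularRows_isLowerTriangular h).span_rows_eq_top hdiag, span_le]
  rintro _ ⟨i, rfl⟩
  exact sarxTriangularRows_mem_span h hny i
end

section
/- If S1 and S2 are two minimal, equivalent SISO SARX systems of types (n_y, n_u) and (n̂_y, n̂_u) respectively, then (n_y, n_u) = (n̂_y, n̂_u). -/
/-- `F` is the input-output map of the SISO SARX system of type `(ny, nu)` with modes `Q` and
coefficients `h q 1, ..., h q (ny+nu)` (1-based) in mode `q`:
`y_t = Σ_{j=1}^{n_y} h_{q_t}^j y_{t-j} + Σ_{j=1}^{n_u} h_{q_t}^{n_y+j} u_{t-j}`,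
with zero initial conditions. -/
def SARXRealizes (Q : Type*) (ny nu : ℕ) (h : Q → ℕ → ℝ)
    (F : (ℕ → Q) → (ℕ → ℝ) → ℕ → ℝ) : Prop :=
  ∀ q u t, F q u t =
    (∑ j ∈ Finset.Icc 1 ny, h (q t) j * (if j ≤ t then F q u (t - j) else 0)) +
    ∑ j ∈ Finset.Icc 1 nu, h (q t) (ny + j) * (if j ≤ t then u (t - j) else 0)

set_option linter.unusedVariables false

set_option linter.unusedSectionVars false

namespace SARXAux

open Polynomial Finset

variable {Q : Type} [Nonempty Q]

theorem range_split (f : ℕ → ℝ) (t : ℕ) :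
    ∑ j ∈ range (t + 1), f j = f 0 + ∑ j ∈ Icc 1 t, f j := by
  have h : range (t + 1) = insert 0 (Icc 1 t) := by
    ext j
    simp only [mem_range, mem_insert, mem_Icc]
    omega
  rw [h, sum_insert (by simp)]

theorem conv (c : ℝ[X]) (m t : ℕ) (hdeg : c.natDegree ≤ m) (x : ℕ → ℝ) :
    ∑ j ∈ Icc 1 m, c.coeff j * (if j ≤ t then x (t - j) else 0)
      = ∑ j ∈ Icc 1 t, c.coeff j * x (t - j) := by
  have h1 : ∑ j ∈ Icc 1 m, c.coeff j * (if j ≤ t then x (t - j) else 0)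
      = ∑ j ∈ Icc 1 (max m t), c.coeff j * (if j ≤ t then x (t - j) else 0) := by
    apply sum_subset (Icc_subset_Icc le_rfl (le_max_left m t))
    intro j hj hj2
    simp only [mem_Icc] at hj hj2
    have hmj : m < j := by omega
    rw [coeff_eq_zero_of_natDegree_lt (lt_of_le_of_lt hdeg hmj), zero_mul]
  have h2 : ∑ j ∈ Icc 1 t, c.coeff j * x (t - j)
      = ∑ j ∈ Icc 1 (max m t), c.coeff j * (if j ≤ t then x (t - j) else 0) := by
    rw [show ∑ j ∈ Icc 1 t, c.coeff j * x (t - j)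
        = ∑ j ∈ Icc 1 t, c.coeff j * (if j ≤ t then x (t - j) else 0) from
      sum_congr rfl (fun j hj => by rw [if_pos (mem_Icc.mp hj).2])]
    apply sum_subset (Icc_subset_Icc le_rfl (le_max_right m t))
    intro j hj hj2
    simp only [mem_Icc] at hj hj2
    rw [if_neg (by omega), mul_zero]
  rw [h1, h2]

/-- AR polynomial of a mode. -/
noncomputable def pA (n : ℕ) (h : Q → ℕ → ℝ) (p : Q) : ℝ[X] :=
  1 - ∑ j ∈ Icc 1 n, C (h p j) * X ^ j

/-- Input polynomial of a mode. -/
noncomputable def pB (n k : ℕ) (h : Q → ℕ → ℝ) (p : Q) : ℝ[X] :=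
  ∑ j ∈ Icc 1 k, C (h p (n + j)) * X ^ j

theorem coeff_sumCX (s : Finset ℕ) (f : ℕ → ℝ) (n : ℕ) :
    (∑ j ∈ s, C (f j) * X ^ j).coeff n = if n ∈ s then f n else 0 := by
  rw [finset_sum_coeff,
    Finset.sum_congr rfl (fun j _ => by
      rw [coeff_C_mul, coeff_X_pow, mul_ite, mul_one, mul_zero])]
  exact Finset.sum_ite_eq s n f

theorem coeff_pA_zero (n : ℕ) (h : Q → ℕ → ℝ) (p : Q) : (pA n h p).coeff 0 = 1 := by
  rw [pA, coeff_sub, coeff_one, coeff_sumCX]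
  simp

theorem coeff_pA_mem {n j : ℕ} (h : Q → ℕ → ℝ) (p : Q) (hj : j ∈ Icc 1 n) :
    (pA n h p).coeff j = -h p j := by
  have hj' := mem_Icc.mp hj
  rw [pA, coeff_sub, coeff_one, coeff_sumCX, if_pos hj, if_neg (by omega)]
  ring

theorem natDegree_pA (n : ℕ) (h : Q → ℕ → ℝ) (p : Q) : (pA n h p).natDegree ≤ n := by
  apply natDegree_le_iff_coeff_eq_zero.mpr
  intro j hj
  rw [pA, coeff_sub, coeff_one, coeff_sumCX, if_neg (by omega),
    if_neg (by simp only [mem_Icc]; omega)]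
  ring

theorem coeff_pB_zero (n k : ℕ) (h : Q → ℕ → ℝ) (p : Q) : (pB n k h p).coeff 0 = 0 := by
  rw [pB, coeff_sumCX]; simp

theorem coeff_pB_mem {n k j : ℕ} (h : Q → ℕ → ℝ) (p : Q) (hj : j ∈ Icc 1 k) :
    (pB n k h p).coeff j = h p (n + j) := by
  rw [pB, coeff_sumCX, if_pos hj]

theorem natDegree_pB (n k : ℕ) (h : Q → ℕ → ℝ) (p : Q) : (pB n k h p).natDegree ≤ k := by
  apply natDegree_le_iff_coeff_eq_zero.mpr
  intro j hj
  rw [pB, coeff_sumCX, if_neg (by simp only [mem_Icc]; omega)]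

/-- A (mode-independent) linear relation valid along all trajectories. -/
def Valid (F : (ℕ → Q) → (ℕ → ℝ) → ℕ → ℝ) (c d : ℝ[X]) : Prop :=
  ∀ q u t, (∑ j ∈ range (t + 1), c.coeff j * F q u (t - j))
    + (∑ j ∈ range (t + 1), d.coeff j * u (t - j)) = 0

/-- A relation valid whenever the current mode is `p`. -/
def MValidP (F : (ℕ → Q) → (ℕ → ℝ) → ℕ → ℝ) (p : Q) (c d : ℝ[X]) : Prop :=
  ∀ q u t, q t = p → (∑ j ∈ range (t + 1), c.coeff j * F q u (t - j))
    + (∑ j ∈ range (t + 1), d.coeff j * u (t - j)) = 0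

theorem mvalid_of_valid {F : (ℕ → Q) → (ℕ → ℝ) → ℕ → ℝ} {c d : ℝ[X]} (hv : Valid F c d)
    (p : Q) : MValidP F p c d := fun q u t _ => hv q u t

theorem mvalid_smul {F : (ℕ → Q) → (ℕ → ℝ) → ℕ → ℝ} {c d : ℝ[X]} {p : Q} (a : ℝ)
    (hv : MValidP F p c d) : MValidP F p (C a * c) (C a * d) := by
  intro q u t hqt
  simp only [coeff_C_mul, mul_assoc]
  rw [← Finset.mul_sum, ← Finset.mul_sum, ← mul_add, hv q u t hqt, mul_zero]

section WithF

variable {F : (ℕ → Q) → (ℕ → ℝ) → ℕ → ℝ}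

theorem F_zero {n k : ℕ} {h : Q → ℕ → ℝ} (hr : SARXRealizes Q n k h F) :
    ∀ q u, F q u 0 = 0 := by
  intro q u
  rw [hr q u 0, Finset.sum_eq_zero, Finset.sum_eq_zero, add_zero]
  · intro j hj
    rw [if_neg (by have := mem_Icc.mp hj; omega), mul_zero]
  · intro j hj
    rw [if_neg (by have := mem_Icc.mp hj; omega), mul_zero]

theorem F_congr_q {n k : ℕ} {h : Q → ℕ → ℝ} (hr : SARXRealizes Q n k h F) :
    ∀ (s : ℕ) (q q' : ℕ → Q) (u : ℕ → ℝ), (∀ r, r ≤ s → q r = q' r) →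
      F q u s = F q' u s := by
  intro s
  induction s using Nat.strong_induction_on with
  | _ s IH =>
    intro q q' u hqq
    rw [hr q u s, hr q' u s, hqq s le_rfl]
    congr 1
    apply sum_congr rfl
    intro j hj
    have hj' := mem_Icc.mp hj
    by_cases hjs : j ≤ s
    · rw [if_pos hjs, if_pos hjs,
        IH (s - j) (by omega) q q' u (fun r hrr => hqq r (by omega))]
    · rw [if_neg hjs, if_neg hjs]

theorem valid_add {c₁ d₁ c₂ d₂ : ℝ[X]} (h1 : Valid F c₁ d₁) (h2 : Valid F c₂ d₂) :
    Valid F (c₁ + c₂) (d₁ + d₂) := by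
  intro q u t
  have e1 := h1 q u t
  have e2 := h2 q u t
  simp only [coeff_add, add_mul, Finset.sum_add_distrib]
  linarith

theorem valid_sub {c₁ d₁ c₂ d₂ : ℝ[X]} (h1 : Valid F c₁ d₁) (h2 : Valid F c₂ d₂) :
    Valid F (c₁ - c₂) (d₁ - d₂) := by
  intro q u t
  have e1 := h1 q u t
  have e2 := h2 q u t
  simp only [coeff_sub, sub_mul, Finset.sum_sub_distrib]
  linarith

theorem valid_smul {c d : ℝ[X]} (a : ℝ) (hv : Valid F c d) : Valid F (C a * c) (C a * d) := by
  intro q u t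
  simp only [coeff_C_mul, mul_assoc]
  rw [← Finset.mul_sum, ← Finset.mul_sum, ← mul_add, hv q u t, mul_zero]

theorem sum_Xmul (c : ℝ[X]) (g : ℕ → ℝ) (t : ℕ) :
    ∑ j ∈ range (t + 1 + 1), (X * c).coeff j * g j
      = ∑ j ∈ range (t + 1), c.coeff j * g (j + 1) := by
  rw [Finset.sum_range_succ']
  simp [coeff_X_mul, mul_coeff_zero, coeff_X_zero]

theorem valid_Xmul {c d : ℝ[X]} (hv : Valid F c d) : Valid F (X * c) (X * d) := by
  intro q u t
  cases t with
  | zero =>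
    simp [Finset.sum_range_succ, mul_coeff_zero, coeff_X_zero]
  | succ t =>
    have e := hv q u t
    have h1 := sum_Xmul c (fun j => F q u (t + 1 - j)) t
    have h2 := sum_Xmul d (fun j => u (t + 1 - j)) t
    simp only [Nat.succ_sub_succ] at h1 h2
    rw [h1, h2]
    exact e

theorem valid_shift_down {c d : ℝ[X]} (hv : Valid F (X * c) (X * d)) : Valid F c d := by
  intro q u t
  have e := hv q u (t + 1)
  have h1 := sum_Xmul c (fun j => F q u (t + 1 - j)) t
  have h2 := sum_Xmul d (fun j => u (t + 1 - j)) t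
  simp only [Nat.succ_sub_succ] at h1 h2
  rw [h1, h2] at e
  exact e

theorem valid_polymul {c d : ℝ[X]} (f : ℝ[X]) (hv : Valid F c d) :
    Valid F (f * c) (f * d) := by
  induction f using Polynomial.induction_on' with
  | add p r hp hr => rw [add_mul, add_mul]; exact valid_add hp hr
  | monomial m a =>
    rw [← C_mul_X_pow_eq_monomial]
    have hx : Valid F (X ^ m * c) (X ^ m * d) := by
      induction m with
      | zero => simpa using hv
      | succ m ihm =>
        rw [show X ^ (m + 1) * c = X * (X ^ m * c) by ring,
          show X ^ (m + 1) * d = X * (X ^ m * d) by ring]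
        exact valid_Xmul ihm
    rw [show C a * X ^ m * c = C a * (X ^ m * c) by ring,
      show C a * X ^ m * d = C a * (X ^ m * d) by ring]
    exact valid_smul a hx

theorem valid_c0 {d : ℝ[X]} (hv : Valid F 0 d) : d = 0 := by
  ext n
  have e := hv (fun _ => Classical.arbitrary Q) (fun s => if s = 0 then 1 else 0) n
  simp only [coeff_zero, zero_mul, Finset.sum_const_zero, zero_add] at e
  rw [coeff_zero]
  rw [Finset.sum_eq_single n (fun j hj hjn => by
      rw [if_neg (by have := mem_range.mp hj; omega), mul_zero])
    (fun hn => absurd (mem_range.mpr (by omega)) hn)] at e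
  simpa using e

theorem valid_dcoeff0 (hF0 : ∀ q u, F q u 0 = 0) {c d : ℝ[X]} (hv : Valid F c d) :
    d.coeff 0 = 0 := by
  have e := hv (fun _ => Classical.arbitrary Q) (fun _ => 1) 0
  simp [hF0] at e
  exact e

theorem valid_parallel {c₁ d₁ c₂ d₂ : ℝ[X]} (h1 : Valid F c₁ d₁) (h2 : Valid F c₂ d₂) :
    c₂ * d₁ = c₁ * d₂ := by
  have h5 := valid_sub (valid_polymul c₂ h1) (valid_polymul c₁ h2)
  rw [show c₂ * c₁ - c₁ * c₂ = 0 by ring] at h5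
  have := valid_c0 h5
  rwa [sub_eq_zero] at this

theorem reduce (hF0 : ∀ q u, F q u 0 = 0) :
    ∀ (N : ℕ) (c d : ℝ[X]), c.natDegree ≤ N → Valid F c d → c ≠ 0 →
      ∃ cs ds : ℝ[X], Valid F cs ds ∧ cs.coeff 0 ≠ 0 := by
  intro N
  induction N with
  | zero =>
    intro c d hdeg hv hc
    refine ⟨c, d, hv, fun h0 => hc ?_⟩
    rw [Polynomial.eq_C_of_natDegree_le_zero hdeg, h0, map_zero]
  | succ N IH =>
    intro c d hdeg hv hc
    by_cases h0 : c.coeff 0 = 0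
    · obtain ⟨c1, hc1⟩ := X_dvd_iff.mpr h0
      obtain ⟨d1, hd1⟩ := X_dvd_iff.mpr (valid_dcoeff0 hF0 hv)
      have hv1 : Valid F c1 d1 := valid_shift_down (by rwa [← hc1, ← hd1])
      have hc10 : c1 ≠ 0 := fun hz => hc (by rw [hc1, hz, mul_zero])
      have hdeg1 : c1.natDegree ≤ N := by
        have hm : (X * c1).natDegree = 1 + c1.natDegree := by
          rw [natDegree_mul X_ne_zero hc10, natDegree_X]
        rw [← hc1] at hm
        omega
      exact IH c1 d1 hdeg1 hv1 hc10
    · exact ⟨c, d, hv, h0⟩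

theorem diff_valid
    (hcongr : ∀ (s : ℕ) (q q' : ℕ → Q) (u : ℕ → ℝ), (∀ r, r ≤ s → q r = q' r) →
      F q u s = F q' u s)
    {p : Q} {c₁ d₁ c₂ d₂ : ℝ[X]} (h1 : MValidP F p c₁ d₁) (h2 : MValidP F p c₂ d₂)
    (h0 : c₁.coeff 0 = c₂.coeff 0) : Valid F (c₁ - c₂) (d₁ - d₂) := by
  intro q u t
  have hq't : Function.update q t p t = p := Function.update_self t p q
  have e1 := h1 (Function.update q t p) u t hq't
  have e2 := h2 (Function.update q t p) u t hq't
  have hFa : ∀ j ∈ range (t + 1),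
      (c₁ - c₂).coeff j * F q u (t - j)
        = (c₁ - c₂).coeff j * F (Function.update q t p) u (t - j) := by
    intro j hj
    have hjt : j ≤ t := by have := mem_range.mp hj; omega
    rcases Nat.eq_zero_or_pos j with hj0 | hj1
    · subst hj0
      rw [coeff_sub, h0, sub_self, zero_mul, zero_mul]
    · rw [hcongr (t - j) q (Function.update q t p) u (fun r hrr => by
        rw [Function.update_of_ne (by omega : r ≠ t)])]
  rw [Finset.sum_congr rfl hFa]
  simp only [coeff_sub, sub_mul, Finset.sum_sub_distrib]
  linarith

theorem rows_mvalid {N M : ℕ} {hh : Q → ℕ → ℝ} (hrr : SARXRealizes Q N M hh F) (p : Q) :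
    MValidP F p (pA N hh p) (-(pB N M hh p)) := by
  intro q u t hqt
  have hreal := hrr q u t
  rw [hqt] at hreal
  rw [range_split, range_split, coeff_pA_zero, coeff_neg, coeff_pB_zero]
  have c1 : ∑ j ∈ Icc 1 t, (pA N hh p).coeff j * F q u (t - j)
      = -∑ j ∈ Icc 1 N, hh p j * (if j ≤ t then F q u (t - j) else 0) := by
    rw [← conv (pA N hh p) N t (natDegree_pA N hh p) (F q u), ← Finset.sum_neg_distrib]
    apply sum_congr rfl
    intro j hj
    rw [coeff_pA_mem hh p hj]
    ring
  have c2 : ∑ j ∈ Icc 1 t, (-(pB N M hh p)).coeff j * u (t - j)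
      = -∑ j ∈ Icc 1 M, hh p (N + j) * (if j ≤ t then u (t - j) else 0) := by
    have hdeg : (-(pB N M hh p)).natDegree ≤ M := by
      rw [natDegree_neg]; exact natDegree_pB N M hh p
    rw [← conv (-(pB N M hh p)) M t hdeg u, ← Finset.sum_neg_distrib]
    apply sum_congr rfl
    intro j hj
    rw [coeff_neg, coeff_pB_mem hh p hj]
    ring
  rw [c1, c2]
  simp only [Nat.sub_zero] at *
  linarith

theorem build {Cp Dp : Q → ℝ[X]} {m k : ℕ}
    (hCM : ∀ p, MValidP F p (Cp p) (Dp p))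
    (hC0 : ∀ p, (Cp p).coeff 0 = 1)
    (hD0 : ∀ p, (Dp p).coeff 0 = 0)
    (hCd : ∀ p, (Cp p).natDegree ≤ m)
    (hDd : ∀ p, (Dp p).natDegree ≤ k) :
    SARXRealizes Q m k
      (fun p j => if j ≤ m then -(Cp p).coeff j else -(Dp p).coeff (j - m)) F := by
  intro q u t
  have e := hCM (q t) q u t rfl
  rw [range_split, range_split, hC0, hD0] at e
  have c1 : ∑ j ∈ Icc 1 m,
      (if j ≤ m then -(Cp (q t)).coeff j else -(Dp (q t)).coeff (j - m))
        * (if j ≤ t then F q u (t - j) else 0)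
      = -∑ j ∈ Icc 1 t, (Cp (q t)).coeff j * F q u (t - j) := by
    rw [← conv (Cp (q t)) m t (hCd (q t)) (F q u), ← Finset.sum_neg_distrib]
    apply sum_congr rfl
    intro j hj
    rw [if_pos (mem_Icc.mp hj).2]
    ring
  have c2 : ∑ j ∈ Icc 1 k,
      (if m + j ≤ m then -(Cp (q t)).coeff (m + j) else -(Dp (q t)).coeff (m + j - m))
        * (if j ≤ t then u (t - j) else 0)
      = -∑ j ∈ Icc 1 t, (Dp (q t)).coeff j * u (t - j) := by
    rw [← conv (Dp (q t)) k t (hDd (q t)) u, ← Finset.sum_neg_distrib]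
    apply sum_congr rfl
    intro j hj
    have hj' := mem_Icc.mp hj
    rw [if_neg (by omega), Nat.add_sub_cancel_left]
    ring
  rw [c1, c2]
  simp only [Nat.sub_zero] at *
  linarith

end WithF

end SARXAux


open Polynomial Finset SARXAux

/-- If `S1` and `S2` are minimal, equivalent SISO SARX systems of types
`(n_y, n_u)` and `(n̂_y, n̂_u)`, then `(n_y, n_u) = (n̂_y, n̂_u)`. -/
theorem stmt13 (Q : Type) [Nonempty Q] (ny nu ny' nu' : ℕ)
    (hnu : 1 ≤ nu) (hle : nu ≤ ny) (hnu' : 1 ≤ nu') (hle' : nu' ≤ ny')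
    (h h' : Q → ℕ → ℝ) (F : (ℕ → Q) → (ℕ → ℝ) → ℕ → ℝ)
    (hr : SARXRealizes Q ny nu h F) (hr' : SARXRealizes Q ny' nu' h' F)
    (hmin : ∀ m k (g : Q → ℕ → ℝ), SARXRealizes Q m k g F → ny + nu ≤ m + k)
    (hmin' : ∀ m k (g : Q → ℕ → ℝ), SARXRealizes Q m k g F → ny' + nu' ≤ m + k) :
    ny = ny' ∧ nu = nu' := by
  classical
  have hF0 : ∀ q u, F q u 0 = 0 := F_zero hr
  have hcongr := F_congr_q hr
  have hMV : ∀ p, MValidP F p (pA ny h p) (-(pB ny nu h p)) := rows_mvalid hr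
  have hMV' : ∀ p, MValidP F p (pA ny' h' p) (-(pB ny' nu' h' p)) := rows_mvalid hr'
  by_cases hsame : ∀ p : Q, pA ny h p = pA ny' h' p ∧ pB ny nu h p = pB ny' nu' h' p
  · -- identical rows: both types dominate the common rows
    have hreal := build (m := min ny ny') (k := min nu nu') hMV
      (fun p => coeff_pA_zero ny h p)
      (fun p => by rw [coeff_neg, coeff_pB_zero]; ring)
      (fun p => le_min (natDegree_pA ny h p)
        (by rw [(hsame p).1]; exact natDegree_pA ny' h' p))
      (fun p => le_min (by rw [natDegree_neg]; exact natDegree_pB ny nu h p)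
        (by rw [natDegree_neg, (hsame p).2]; exact natDegree_pB ny' nu' h' p))
    have l1 := hmin _ _ _ hreal
    have l2 := hmin' _ _ _ hreal
    have m1 : min ny ny' ≤ ny := Nat.min_le_left _ _
    have m2 : min ny ny' ≤ ny' := Nat.min_le_right _ _
    have m3 : min nu nu' ≤ nu := Nat.min_le_left _ _
    have m4 : min nu nu' ≤ nu' := Nat.min_le_right _ _
    constructor <;> omega
  · push_neg at hsame
    obtain ⟨p₀, hp₀⟩ := hsame
    have hv : Valid F (pA ny h p₀ - pA ny' h' p₀)
        ((-(pB ny nu h p₀)) - (-(pB ny' nu' h' p₀))) :=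
      diff_valid hcongr (hMV p₀) (hMV' p₀)
        (by rw [coeff_pA_zero, coeff_pA_zero])
    have hcne : pA ny h p₀ - pA ny' h' p₀ ≠ 0 := by
      intro hc
      rw [hc] at hv
      have hd := valid_c0 hv
      rw [sub_eq_zero, neg_inj] at hd
      exact hp₀ (sub_eq_zero.mp hc) hd
    obtain ⟨cs, ds, hgv, hκ⟩ := reduce hF0 _ _ _ le_rfl hv hcne
    have hds0 : ds.coeff 0 = 0 := valid_dcoeff0 hF0 hgv
    have hcs0 : cs ≠ 0 := fun hz => hκ (by rw [hz, coeff_zero])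
    -- key identity
    have keygen : ∀ (N M : ℕ) (hh : Q → ℕ → ℝ), SARXRealizes Q N M hh F →
        ∀ p, pA N hh p * ds = cs * (-(pB N M hh p)) := by
      intro N M hh hrr p
      have hsv : Valid F (C (cs.coeff 0) * pA N hh p - cs)
          (C (cs.coeff 0) * (-(pB N M hh p)) - ds) :=
        diff_valid hcongr (mvalid_smul (cs.coeff 0) (rows_mvalid hrr p))
          (mvalid_of_valid hgv p)
          (by rw [coeff_C_mul, coeff_pA_zero, mul_one])
      have hpar := valid_parallel hgv hsv
      have hC : (C (cs.coeff 0) : ℝ[X]) ≠ 0 := by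
        simpa using hκ
      apply mul_left_cancel₀ hC
      linear_combination hpar
    by_cases hds : ds = 0
    · exfalso
      have hD0 : ∀ p, -(pB ny nu h p) = 0 := by
        intro p
        have hk := keygen ny nu h hr p
        rw [hds, mul_zero] at hk
        exact ((mul_eq_zero.mp hk.symm).resolve_left hcs0)
      have hreal := build (Cp := fun p => pA ny h p) (Dp := fun _ => (0 : ℝ[X]))
        (m := ny) (k := 0)
        (fun p => by have hh2 := hMV p; rw [hD0 p] at hh2; exact hh2)
        (fun p => coeff_pA_zero ny h p)
        (fun _ => by rw [coeff_zero])
        (fun p => natDegree_pA ny h p)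
        (fun _ => by rw [natDegree_zero])
      have := hmin _ _ _ hreal
      omega
    · set G := GCDMonoid.gcd cs ds with hGdef
      obtain ⟨ms, hms⟩ : G ∣ cs := gcd_dvd_left cs ds
      obtain ⟨ns, hns⟩ : G ∣ ds := gcd_dvd_right cs ds
      have hG0 : G ≠ 0 := fun hz => hcs0 (by rw [hms, hz, zero_mul])
      have hcop : IsCoprime ms ns := by
        have hco := isCoprime_div_gcd_div_gcd (p := cs) hds
        rwa [← hGdef, hms, hns, mul_div_cancel_left₀ _ hG0,
          mul_div_cancel_left₀ _ hG0] at hco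
      have hms0 : ms ≠ 0 := fun hz => hcs0 (by rw [hms, hz, mul_zero])
      have hns0 : ns ≠ 0 := fun hz => hds (by rw [hns, hz, mul_zero])
      have side : ∀ (N M : ℕ) (hh : Q → ℕ → ℝ), SARXRealizes Q N M hh F →
          (∀ m k g, SARXRealizes Q m k g F → N + M ≤ m + k) →
          ∃ KK, N = ms.natDegree + KK ∧ M = ns.natDegree + KK := by
        intro N M hh hrr hminn
        have factor : ∀ p, ∃ Φ : ℝ[X],
            pA N hh p = ms * Φ ∧ -(pB N M hh p) = Φ * ns := by
          intro p
          have hkey := keygen N M hh hrr p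
          rw [hms, hns] at hkey
          have hkey2 : pA N hh p * ns = ms * (-(pB N M hh p)) := by
            apply mul_left_cancel₀ hG0
            linear_combination hkey
          obtain ⟨Φ, hΦ⟩ : ms ∣ pA N hh p :=
            hcop.dvd_of_dvd_mul_right ⟨-(pB N M hh p), hkey2⟩
          refine ⟨Φ, hΦ, ?_⟩
          have h2 : ms * (Φ * ns) = ms * (-(pB N M hh p)) := by
            rw [← hkey2, hΦ]; ring
          exact mul_left_cancel₀ hms0 h2.symm
        choose Φ hΦ1 hΦ2 using factor
        have hA0 : ∀ p, pA N hh p ≠ 0 := fun p hz => by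
          have := coeff_pA_zero N hh p
          rw [hz, coeff_zero] at this
          exact one_ne_zero this.symm
        have hΦ0 : ∀ p, Φ p ≠ 0 := fun p hz => hA0 p (by rw [hΦ1 p, hz, mul_zero])
        have hdegA : ∀ p, ms.natDegree + (Φ p).natDegree ≤ N := by
          intro p
          rw [← natDegree_mul hms0 (hΦ0 p), ← hΦ1 p]
          exact natDegree_pA N hh p
        have hdegD : ∀ p, (Φ p).natDegree + ns.natDegree ≤ M := by
          intro p
          rw [← natDegree_mul (hΦ0 p) hns0, ← hΦ2 p, natDegree_neg]
          exact natDegree_pB N M hh p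
        set KK := min (N - ms.natDegree) (M - ns.natDegree) with hKK
        have hKb : ∀ p, (Φ p).natDegree ≤ KK :=
          fun p => le_min (by have := hdegA p; omega) (by have := hdegD p; omega)
        have hreal := build (m := ms.natDegree + KK) (k := ns.natDegree + KK)
          (rows_mvalid hrr)
          (fun p => coeff_pA_zero N hh p)
          (fun p => by rw [coeff_neg, coeff_pB_zero]; ring)
          (fun p => by
            rw [hΦ1 p, natDegree_mul hms0 (hΦ0 p)]
            exact Nat.add_le_add_left (hKb p) _)
          (fun p => by
            rw [hΦ2 p, natDegree_mul (hΦ0 p) hns0]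
            have := hKb p
            omega)
        have hle2 := hminn _ _ _ hreal
        have p := Classical.arbitrary Q
        have h1 := hdegA p
        have h2 := hdegD p
        have k1 : KK ≤ N - ms.natDegree := Nat.min_le_left _ _
        have k2 : KK ≤ M - ns.natDegree := Nat.min_le_right _ _
        exact ⟨KK, by omega, by omega⟩
      obtain ⟨K1, e1, e2⟩ := side ny nu h hr hmin
      obtain ⟨K2, e3, e4⟩ := side ny' nu' h' hr' hmin'
      have s1 := hmin ny' nu' h' hr'
      have s2 := hmin' ny nu h hr
      constructor <;> omega
end

section
/- Let A be the SARX companion matrix with coefficient row h of type (n_y, n_u), n = n_y + n_u, and suppose h^{n_y} ≠ 0 or h^n ≠ 0. Then the column space of A equals span({e_1,...,e_n} \ {e_{n_y+1}}), i.e., the columns of A span the (n-1)-dimensional space spanned by all standard basis vectors except e_{n_y+1}. -/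
/-- If `h^{n_y} ≠ 0` or `h^n ≠ 0`, the columns of the SARX companion matrix span
`span({e_1,...,e_n} \ {e_{n_y+1}})`. (0-based: the excluded vector is `Pi.single ⟨ny⟩ 1`.) -/
theorem stmt16 (ny nu : ℕ) (hny : 1 ≤ ny) (hnu : 1 ≤ nu) (h : Fin (ny + nu) → ℝ)
    (hnz : h ⟨ny - 1, by omega⟩ ≠ 0 ∨ h ⟨ny + nu - 1, by omega⟩ ≠ 0) :
    Submodule.span ℝ
        (Set.range fun j : Fin (ny + nu) =>
          (sarxCompanion ny nu h).mulVec (Pi.single j 1)) =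
      Submodule.span ℝ
        {v : Fin (ny + nu) → ℝ | ∃ i : Fin (ny + nu), (i : ℕ) ≠ ny ∧ v = Pi.single i 1} := by
  have hnn : 0 < ny + nu := by omega
  set e0 : Fin (ny + nu) → ℝ := Pi.single (⟨0, hnn⟩ : Fin (ny + nu)) 1 with he0
  -- column formula
  have colA : ∀ k : Fin (ny + nu), (sarxCompanion ny nu h).mulVec (Pi.single k 1) =
      fun i : Fin (ny+nu) => (if (i : ℕ) = 0 then h k else 0) +
        (if (i : ℕ) = (k : ℕ) + 1 ∧ (k : ℕ) + 1 ≠ ny then 1 else 0) := by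
    intro k
    rw [Matrix.mulVec_single]
    funext i
    simp [sarxCompanion]
  -- columns where the second summand vanishes
  have colEq1 : ∀ k : Fin (ny + nu), ((k : ℕ) + 1 = ny ∨ (k : ℕ) + 1 = ny + nu) →
      (sarxCompanion ny nu h).mulVec (Pi.single k 1) = h k • e0 := by
    intro k hk
    rw [colA k]
    funext i
    rw [he0, Pi.smul_apply, Pi.single_apply]
    by_cases hi : (i : ℕ) = 0
    · have : i = (⟨0, hnn⟩ : Fin (ny + nu)) := Fin.ext hi
      simp [hi, this]
    · have : i ≠ (⟨0, hnn⟩ : Fin (ny + nu)) := fun hh => hi (by rw [hh])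
      simp [hi, this]
      intro hik
      rcases hk with hk | hk
      · omega
      · exact absurd (hik ▸ hk) (by omega : (i : ℕ) ≠ ny + nu)
  -- generic columns
  have colEq2 : ∀ (k : Fin (ny + nu)) (hk : (k : ℕ) + 1 < ny + nu)
      (hk2 : (k : ℕ) + 1 ≠ ny),
      (sarxCompanion ny nu h).mulVec (Pi.single k 1) =
        h k • e0 + Pi.single (⟨(k : ℕ) + 1, hk⟩ : Fin (ny + nu)) 1 := by
    intro k hk hk2
    rw [colA k]
    funext i
    rw [Pi.add_apply, he0, Pi.smul_apply, Pi.single_apply, Pi.single_apply]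
    by_cases hi : (i : ℕ) = 0
    · have h1 : i = (⟨0, hnn⟩ : Fin (ny + nu)) := Fin.ext hi
      have h2 : i ≠ (⟨(k : ℕ) + 1, hk⟩ : Fin (ny + nu)) := by
        intro hh; rw [hh] at hi; simp at hi
      simp [hi, h1, h2]
    · have h1 : i ≠ (⟨0, hnn⟩ : Fin (ny + nu)) := fun hh => hi (by rw [hh])
      by_cases h2 : (i : ℕ) = (k : ℕ) + 1
      · have h3 : i = (⟨(k : ℕ) + 1, hk⟩ : Fin (ny + nu)) := Fin.ext h2
        simp [hi, h1, h2, h3, hk2]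
      · have h3 : i ≠ (⟨(k : ℕ) + 1, hk⟩ : Fin (ny + nu)) :=
          fun hh => h2 (by rw [hh])
        simp [hi, h1, h2, h3]
  set S := Submodule.span ℝ
      (Set.range fun j : Fin (ny + nu) =>
        (sarxCompanion ny nu h).mulVec (Pi.single j 1)) with hS
  have hcolS : ∀ k : Fin (ny + nu),
      (sarxCompanion ny nu h).mulVec (Pi.single k 1) ∈ S :=
    fun k => Submodule.subset_span ⟨k, rfl⟩
  -- e0 ∈ S
  have he0S : e0 ∈ S := by
    rcases hnz with hz | hz
    · have hk : ((⟨ny - 1, by omega⟩ : Fin (ny + nu)) : ℕ) + 1 = ny := by simp; omega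
      have := colEq1 ⟨ny - 1, by omega⟩ (Or.inl hk)
      have heq : e0 = (h ⟨ny - 1, by omega⟩)⁻¹ •
          (sarxCompanion ny nu h).mulVec (Pi.single ⟨ny - 1, by omega⟩ 1) := by
        rw [this, smul_smul, inv_mul_cancel₀ hz, one_smul]
      rw [heq]
      exact S.smul_mem _ (hcolS _)
    · have hk : ((⟨ny + nu - 1, by omega⟩ : Fin (ny + nu)) : ℕ) + 1 = ny + nu := by
        simp; omega
      have := colEq1 ⟨ny + nu - 1, by omega⟩ (Or.inr hk)
      have heq : e0 = (h ⟨ny + nu - 1, by omega⟩)⁻¹ •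
          (sarxCompanion ny nu h).mulVec (Pi.single ⟨ny + nu - 1, by omega⟩ 1) := by
        rw [this, smul_smul, inv_mul_cancel₀ hz, one_smul]
      rw [heq]
      exact S.smul_mem _ (hcolS _)
  apply le_antisymm
  · rw [Submodule.span_le]
    rintro _ ⟨k, rfl⟩
    dsimp only
    by_cases hk : (k : ℕ) + 1 < ny + nu ∧ (k : ℕ) + 1 ≠ ny
    · rw [colEq2 k hk.1 hk.2]
      refine Submodule.add_mem _ (Submodule.smul_mem _ _ ?_) ?_
      · exact Submodule.subset_span ⟨⟨0, hnn⟩, by simp; omega, rfl⟩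
      · exact Submodule.subset_span ⟨⟨(k : ℕ) + 1, hk.1⟩, by simpa using hk.2, rfl⟩
    · have hk' : (k : ℕ) + 1 = ny ∨ (k : ℕ) + 1 = ny + nu := by
        have := k.isLt; omega
      rw [colEq1 k hk']
      exact Submodule.smul_mem _ _
        (Submodule.subset_span ⟨⟨0, hnn⟩, by simp; omega, rfl⟩)
  · rw [Submodule.span_le]
    rintro _ ⟨i, hi, rfl⟩
    by_cases hi0 : (i : ℕ) = 0
    · have : i = (⟨0, hnn⟩ : Fin (ny + nu)) := Fin.ext hi0
      rw [this]
      exact he0S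
    · have hk : (i : ℕ) - 1 < ny + nu := by have := i.isLt; omega
      set k : Fin (ny + nu) := ⟨(i : ℕ) - 1, hk⟩ with hkdef
      have hk1 : (k : ℕ) + 1 < ny + nu := by have := i.isLt; simp [hkdef]; omega
      have hk2 : (k : ℕ) + 1 ≠ ny := by simp [hkdef]; omega
      have hik : i = (⟨(k : ℕ) + 1, hk1⟩ : Fin (ny + nu)) := Fin.ext (by simp [hkdef]; omega)
      have heq : (Pi.single i 1 : Fin (ny + nu) → ℝ) =
          (sarxCompanion ny nu h).mulVec (Pi.single k 1) - h k • e0 := by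
        rw [colEq2 k hk1 hk2, hik]; ring_nf
      rw [heq]
      exact Submodule.sub_mem _ (hcolS k) (Submodule.smul_mem _ _ he0S)
end
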